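/- Let Λ be an even lattice. The assignment N ↦ N/Λ is a bijection between the set of even overlattices Λ ⊆ N ⊆ Λ ⊗ ℚ of finite index (with the form extended ℚ-bilinearly) and the set of isotropic subgroups H ⊆ A_Λ of the discriminant group (i.e. subgroups on which the discriminant quadratic form vanishes). In particular, for every even overlattice N of finite index, N embeds naturally in the dual lattice Λ^∨ and N/Λ is isotropic in A_Λ, and conversely every isotropic subgroup H ⊆ A_Λ arises as N/Λ for a unique such overlattice N (the preimage of H in Λ^∨). -/

import Mathlib

/-!
The quotient map `ℚⁿ → ℚⁿ/Λ` induces a bijection between subgroups containing `Λ` and subgroups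
of `ℚⁿ/Λ`, with inverse `H ↦` preimage of `H`; it remains to match the two side conditions. An
integral overlattice lies in `Λ^∨`, and its image is isotropic because it is even. Conversely, the
preimage of an isotropic `H ≤ Λ^∨/Λ` is even, hence integral by polarization, and it has finite
index over `Λ` because `det M • Λ^∨ ≤ Λ` makes `Λ^∨/Λ` finite.
-/

open Matrix

section

variable (n : ℕ) (M : Matrix (Fin n) (Fin n) ℤ)

/-- The lattice `Λ = ℤⁿ` inside `Λ ⊗ ℚ = ℚⁿ`. -/
def intLat : AddSubgroup (Fin n → ℚ) := ((Int.castAddHom ℚ).compLeft (Fin n)).range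

/-- The ℚ-bilinear extension of the bilinear form with Gram matrix `M` to `Λ ⊗ ℚ`. -/
def bilinQ (x y : Fin n → ℚ) : ℚ := x ⬝ᵥ ((M.map (Int.cast : ℤ → ℚ)) *ᵥ y)

/-- The dual lattice `Λ^∨ = {x ∈ Λ ⊗ ℚ : (x, Λ) ⊆ ℤ}`. -/
def dualLat : AddSubgroup (Fin n → ℚ) where
  carrier := {x | ∀ y ∈ intLat n, ∃ k : ℤ, bilinQ n M x y = (k : ℚ)}
  zero_mem' := fun y _ => ⟨0, by simp [bilinQ]⟩
  add_mem' := by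
    intro a b ha hb y hy
    obtain ⟨k, hk⟩ := ha y hy
    obtain ⟨l, hl⟩ := hb y hy
    exact ⟨k + l, by simp [bilinQ, add_dotProduct] at *; rw [hk, hl]⟩
  neg_mem' := by
    intro a ha y hy
    obtain ⟨k, hk⟩ := ha y hy
    exact ⟨-k, by simp [bilinQ, neg_dotProduct] at *; rw [hk]⟩

/-- The quotient map `Λ ⊗ ℚ → (Λ ⊗ ℚ)/Λ`; the discriminant group `A_Λ = Λ^∨/Λ` is the image
of the dual lattice under this map. -/
def quotMap : (Fin n → ℚ) →+ (Fin n → ℚ) ⧸ intLat n := QuotientAddGroup.mk' (intLat n)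

/-- The set of even overlattices `Λ ⊆ N ⊆ Λ ⊗ ℚ` of finite index: subgroups of `Λ ⊗ ℚ`
containing `Λ` with finite quotient `N/Λ`, on which the ℚ-bilinear extension of the form is
integral and even. -/
def overLattices : Set (AddSubgroup (Fin n → ℚ)) :=
  {N | intLat n ≤ N ∧ Finite ↥(N.map (quotMap n)) ∧
    (∀ x ∈ N, ∀ y ∈ N, ∃ k : ℤ, bilinQ n M x y = (k : ℚ)) ∧
    (∀ x ∈ N, ∃ k : ℤ, bilinQ n M x x = 2 * (k : ℚ))}

/-- The set of isotropic subgroups of the discriminant group `A_Λ = Λ^∨/Λ`: subgroups of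
`(Λ ⊗ ℚ)/Λ` contained in `Λ^∨/Λ` on which the discriminant quadratic form
`q([x]) = (x,x) mod 2ℤ` vanishes. -/
def isotropicSubgroups : Set (AddSubgroup ((Fin n → ℚ) ⧸ intLat n)) :=
  {H | H ≤ (dualLat n M).map (quotMap n) ∧
    ∀ x ∈ dualLat n M, quotMap n x ∈ H → ∃ k : ℤ, bilinQ n M x x = 2 * (k : ℚ)}

lemma mem_intLat_iff {x : Fin n → ℚ} : x ∈ intLat n ↔ ∃ v : Fin n → ℤ, (fun i => (v i : ℚ)) = x := by
  simp [intLat, AddMonoidHom.compLeft, Function.comp_def]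

lemma intCast_mem_intLat (v : Fin n → ℤ) : (fun i => (v i : ℚ)) ∈ intLat n :=
  (mem_intLat_iff n).mpr ⟨v, rfl⟩

lemma quotMap_surjective : Function.Surjective (quotMap n) :=
  QuotientAddGroup.mk'_surjective _

lemma ker_quotMap : (quotMap n).ker = intLat n :=
  QuotientAddGroup.ker_mk' _

lemma comap_map_quotMap {N : AddSubgroup (Fin n → ℚ)} (hN : intLat n ≤ N) :
    (N.map (quotMap n)).comap (quotMap n) = N :=
  AddSubgroup.comap_map_eq_self ((ker_quotMap n).trans_le hN)

lemma quotMap_mem_map_iff {N : AddSubgroup (Fin n → ℚ)} (hN : intLat n ≤ N) {x : Fin n → ℚ} :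
    quotMap n x ∈ N.map (quotMap n) ↔ x ∈ N := by
  rw [← AddSubgroup.mem_comap, comap_map_quotMap n hN]

lemma bilinQ_intCast (v w : Fin n → ℤ) :
    bilinQ n M (fun i => (v i : ℚ)) (fun i => (w i : ℚ)) = ((v ⬝ᵥ (M *ᵥ w) : ℤ) : ℚ) := by
  simp [bilinQ, dotProduct, mulVec, Finset.mul_sum]

lemma bilinQ_comm (hsymm : Mᵀ = M) (x y : Fin n → ℚ) : bilinQ n M x y = bilinQ n M y x := by
  have hsymmQ : (M.map (Int.cast : ℤ → ℚ))ᵀ = M.map Int.cast := by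
    rw [← Matrix.transpose_map, hsymm]
  rw [bilinQ, bilinQ, dotProduct_mulVec, ← vecMul_transpose, hsymmQ, dotProduct_comm]

lemma bilinQ_add_add (hsymm : Mᵀ = M) (x y : Fin n → ℚ) :
    bilinQ n M (x + y) (x + y) = bilinQ n M x x + 2 * bilinQ n M x y + bilinQ n M y y := by
  have hexpand : bilinQ n M (x + y) (x + y) =
      bilinQ n M x x + bilinQ n M x y + bilinQ n M y x + bilinQ n M y y := by
    simp only [bilinQ, mulVec_add, dotProduct_add, add_dotProduct]
    ring
  rw [hexpand, bilinQ_comm n M hsymm y x]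
  ring

lemma intLat_le_dualLat : intLat n ≤ dualLat n M := by
  rintro _ hx _ hy
  obtain ⟨v, rfl⟩ := (mem_intLat_iff n).mp hx
  obtain ⟨w, rfl⟩ := (mem_intLat_iff n).mp hy
  exact ⟨_, bilinQ_intCast n M v w⟩

/-- Polarization: `2 (x, y) = (x + y, x + y) - (x, x) - (y, y)`. -/
lemma exists_int_bilinQ_of_even (hsymm : Mᵀ = M) {N : AddSubgroup (Fin n → ℚ)}
    (heven : ∀ x ∈ N, ∃ k : ℤ, bilinQ n M x x = 2 * (k : ℚ)) {x y : Fin n → ℚ}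
    (hx : x ∈ N) (hy : y ∈ N) : ∃ k : ℤ, bilinQ n M x y = (k : ℚ) := by
  obtain ⟨a, ha⟩ := heven (x + y) (N.add_mem hx hy)
  obtain ⟨b, hb⟩ := heven x hx
  obtain ⟨c, hc⟩ := heven y hy
  refine ⟨a - b - c, ?_⟩
  rw [bilinQ_add_add n M hsymm, hb, hc] at ha
  push_cast
  linarith

lemma mulVec_mem_intLat_of_mem_dualLat (hsymm : Mᵀ = M) {x : Fin n → ℚ} (hx : x ∈ dualLat n M) :
    M.map (Int.cast : ℤ → ℚ) *ᵥ x ∈ intLat n := by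
  have hcoord : ∀ i, ∃ k : ℤ, (M.map (Int.cast : ℤ → ℚ) *ᵥ x) i = k := by
    intro i
    obtain ⟨k, hk⟩ := hx _ (intCast_mem_intLat n (Pi.single i 1))
    refine ⟨k, ?_⟩
    have hsingle : (fun j => ((Pi.single i 1 : Fin n → ℤ) j : ℚ)) = Pi.single i 1 := by
      ext j
      by_cases hj : j = i <;> simp [hj]
    rw [← hk, hsingle, bilinQ_comm n M hsymm, bilinQ, single_dotProduct, one_mul]
  choose w hw using hcoord
  exact (mem_intLat_iff n).mpr ⟨w, funext fun i => (hw i).symm⟩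

/-- `det M • x = adj M (M x)`, where both `adj M` and `M x` are integral. -/
lemma det_smul_mem_intLat_of_mem_dualLat (hsymm : Mᵀ = M) {x : Fin n → ℚ}
    (hx : x ∈ dualLat n M) : M.det • x ∈ intLat n := by
  obtain ⟨w, hw⟩ := (mem_intLat_iff n).mp (mulVec_mem_intLat_of_mem_dualLat n M hsymm hx)
  refine (mem_intLat_iff n).mpr ⟨M.adjugate *ᵥ w, ?_⟩
  have hdet : (M.map (Int.cast : ℤ → ℚ)).det = M.det := by
    simpa using (RingHom.map_det (Int.castRingHom ℚ) M).symm
  have hadj : (M.map (Int.cast : ℤ → ℚ)).adjugate = M.adjugate.map Int.cast := by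
    simpa using (RingHom.map_adjugate (Int.castRingHom ℚ) M).symm
  have hcast : (fun i => ((M.adjugate *ᵥ w) i : ℚ)) =
      M.adjugate.map Int.cast *ᵥ fun i => (w i : ℚ) := by
    ext i
    simp [mulVec, dotProduct]
  rw [hcast, hw, ← hadj, mulVec_mulVec, adjugate_mul, hdet, smul_mulVec, one_mulVec]
  exact Int.cast_smul_eq_zsmul ℚ M.det x

/-- Representatives of `x` with `d • x = v` integral are `(v % d) / d`, with `0 ≤ v % d < |d|`. -/
lemma finite_quotMap_image_of_zsmul_mem {d : ℤ} (hd : d ≠ 0) :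
    (quotMap n '' {x | d • x ∈ intLat n}).Finite := by
  refine ((Set.Finite.pi' fun _ => Set.finite_Ico (0 : ℤ) |d|).image
    fun r : Fin n → ℤ => quotMap n fun i => (r i : ℚ) / d).subset ?_
  rintro _ ⟨x, hx, rfl⟩
  obtain ⟨v, hv⟩ := (mem_intLat_iff n).mp hx
  refine ⟨fun i => v i % d, fun i => ⟨Int.emod_nonneg _ hd, Int.emod_lt_abs _ hd⟩, ?_⟩
  have hdecomp : x = (fun i => ((v i % d : ℤ) : ℚ) / d) + fun i => ((v i / d : ℤ) : ℚ) := by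
    ext i
    have hvi : (v i : ℚ) = d * x i := by simpa using congrFun hv i
    have hdQ : (d : ℚ) ≠ 0 := Int.cast_ne_zero.mpr hd
    have hdiv := congrArg (Int.cast : ℤ → ℚ) (Int.emod_add_mul_ediv (v i) d)
    push_cast at hdiv
    rw [Pi.add_apply, div_add' _ _ _ hdQ, eq_div_iff hdQ]
    linear_combination -hvi - hdiv
  have hint : quotMap n (fun i => ((v i / d : ℤ) : ℚ)) = 0 :=
    (QuotientAddGroup.eq_zero_iff _).mpr (intCast_mem_intLat n _)
  rw [hdecomp, map_add, hint, add_zero]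

lemma finite_map_dualLat (hsymm : Mᵀ = M) (hnd : M.det ≠ 0) :
    Finite ((dualLat n M).map (quotMap n)) :=
  Set.Finite.to_subtype <| (finite_quotMap_image_of_zsmul_mem n hnd).subset <|
    Set.image_mono fun _ hx => det_smul_mem_intLat_of_mem_dualLat n M hsymm hx

lemma le_dualLat_of_mem_overLattices {N : AddSubgroup (Fin n → ℚ)} (hN : N ∈ overLattices n M) :
    N ≤ dualLat n M :=
  fun x hx y hy => hN.2.2.1 x hx y (hN.1 hy)

lemma map_quotMap_mem_isotropicSubgroups {N : AddSubgroup (Fin n → ℚ)}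
    (hN : N ∈ overLattices n M) : N.map (quotMap n) ∈ isotropicSubgroups n M :=
  ⟨AddSubgroup.map_mono (le_dualLat_of_mem_overLattices n M hN),
    fun x _ hx => hN.2.2.2 x ((quotMap_mem_map_iff n hN.1).mp hx)⟩

lemma comap_quotMap_mem_overLattices (hsymm : Mᵀ = M) (hnd : M.det ≠ 0)
    {H : AddSubgroup ((Fin n → ℚ) ⧸ intLat n)} (hH : H ∈ isotropicSubgroups n M) :
    H.comap (quotMap n) ∈ overLattices n M := by
  obtain ⟨hle, hiso⟩ := hH
  have hdual : H.comap (quotMap n) ≤ dualLat n M := by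
    intro x hx
    rw [← quotMap_mem_map_iff n (intLat_le_dualLat n M)]
    exact hle hx
  have heven : ∀ x ∈ H.comap (quotMap n), ∃ k : ℤ, bilinQ n M x x = 2 * (k : ℚ) :=
    fun x hx => hiso x (hdual hx) hx
  refine ⟨?_, ?_, fun x hx y hy => exists_int_bilinQ_of_even n M hsymm heven hx hy, heven⟩
  · exact (ker_quotMap n).symm.trans_le (AddSubgroup.ker_le_comap _ _)
  · rw [AddSubgroup.map_comap_eq_self_of_surjective (quotMap_surjective n)]
    have := finite_map_dualLat n M hsymm hnd
    exact Finite.Set.subset _ hle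

theorem stmt_0 (hsymm : Mᵀ = M) (hnd : M.det ≠ 0) :
    (∀ N ∈ overLattices n M, N ≤ dualLat n M) ∧
    Set.BijOn (fun N : AddSubgroup (Fin n → ℚ) => N.map (quotMap n))
      (overLattices n M) (isotropicSubgroups n M) := by
  refine ⟨fun N hN => le_dualLat_of_mem_overLattices n M hN,
    fun N hN => map_quotMap_mem_isotropicSubgroups n M hN, ?_, ?_⟩
  · intro N₁ h₁ N₂ h₂ heq
    rw [← comap_map_quotMap n h₁.1, ← comap_map_quotMap n h₂.1]
    exact congrArg _ heq
  · intro H hH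
    exact ⟨_, comap_quotMap_mem_overLattices n M hsymm hnd hH,
      AddSubgroup.map_comap_eq_self_of_surjective (quotMap_surjective n) H⟩

end
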